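/- arXiv:1911.02235 — 2 statements merged into one kernel-verified Lean document; each statement's English description precedes it below -/
import Mathlib

section
/- Any algorithm computing all partial sums a_i = Σ_{j ⪰ i} q_j for i ∈ {0,1}^n using only additions of the inputs q_j (each a_i directly a sum in which each required addend is used exactly once, i.e., a 'direct' addition-only algorithm) requires at least n·2^(n-1) additions. -/
/-!
Model a direct program by the sets of inputs its values add up, and split the input indices
into the low half `j < 2^k` and the high half. Intersecting every value with the low half gives
a direct program for the superset sums of dimension `k`; keeping only the values that avoid the
low half gives another. Every addition counted by one of them is an addition of the original
program, and no addition is counted by both. The induction then needs `2^k` further additions: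
for each `i < 2^k`, following the output `a_i` back through the program along the addend
`q_{i + 2^k}` leads to an addition of a value avoiding the low half to one meeting it, and
these additions are distinct because the bitwise order is antisymmetric.
-/

open Finset

def bitSupersets (n i : ℕ) : Finset ℕ := (range (2 ^ n)).filter (fun j => i &&& j = i)

section bitSupersets

variable {n k i j : ℕ}

lemma mem_bitSupersets : j ∈ bitSupersets n i ↔ j < 2 ^ n ∧ i &&& j = i := by
  simp [bitSupersets]

lemma self_mem_bitSupersets (hi : i < 2 ^ n) : i ∈ bitSupersets n i :=
  mem_bitSupersets.2 ⟨hi, Nat.and_self i⟩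

lemma eq_of_mem_bitSupersets_of_mem (hj : j ∈ bitSupersets n i) (hi : i ∈ bitSupersets n j) :
    i = j := by
  rw [mem_bitSupersets] at hi hj
  rw [← hj.2, Nat.and_comm, hi.2]

lemma land_add_two_pow (hi : i < 2 ^ k) (hj : j < 2 ^ k) : i &&& (j + 2 ^ k) = i &&& j := by
  rw [← Nat.or_two_pow_eq_add_of_lt hj, Nat.and_or_distrib_left, Nat.and_comm i (2 ^ k),
    Nat.two_pow_and, Nat.testBit_lt_two_pow hi]
  simp

lemma add_two_pow_land_add_two_pow (hi : i < 2 ^ k) (hj : j < 2 ^ k) :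
    (i + 2 ^ k) &&& (j + 2 ^ k) = (i &&& j) + 2 ^ k := by
  rw [← Nat.or_two_pow_eq_add_of_lt hi, ← Nat.or_two_pow_eq_add_of_lt hj,
    ← Nat.or_and_distrib_right, Nat.or_two_pow_eq_add_of_lt (Nat.and_lt_two_pow i hj)]

lemma add_two_pow_mem_bitSupersets_succ_iff (hi : i < 2 ^ k) (hj : j < 2 ^ k) :
    j + 2 ^ k ∈ bitSupersets (k + 1) i ↔ j ∈ bitSupersets k i := by
  simp only [mem_bitSupersets, land_add_two_pow hi hj, pow_succ]
  omega

lemma bitSupersets_succ_inter_range :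
    bitSupersets (k + 1) i ∩ range (2 ^ k) = bitSupersets k i := by
  ext j
  simp only [mem_inter, mem_bitSupersets, mem_range, pow_succ]
  omega

lemma bitSupersets_succ_add_two_pow (hi : i < 2 ^ k) :
    bitSupersets (k + 1) (i + 2 ^ k) = (bitSupersets k i).map (addRightEmbedding (2 ^ k)) := by
  ext j
  simp only [mem_map, addRightEmbedding_apply, mem_bitSupersets, pow_succ]
  constructor
  · rintro ⟨hj, hij⟩
    have hle : i + 2 ^ k ≤ j := hij ▸ Nat.and_le_right
    refine ⟨j - 2 ^ k, ⟨by omega, ?_⟩, by omega⟩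
    rw [← Nat.sub_add_cancel (le_of_add_le_right hle),
      add_two_pow_land_add_two_pow hi (by omega)] at hij
    omega
  · rintro ⟨a, ⟨ha, hia⟩, rfl⟩
    exact ⟨by omega, by rw [add_two_pow_land_add_two_pow hi ha, hia]⟩

end bitSupersets

section DirectProgram

variable {α : Type*} {m : ℕ} {v : Fin m → Finset α} {A : Finset (Fin m)} {L : Finset α}
  {t : Fin m}

/-- A value of a straight-line program is modelled by the set of inputs it adds up; a step is
free if its value is a single input (or nothing) or repeats an earlier value. -/
def IsFreeStep (v : Fin m → Finset α) (t : Fin m) : Prop :=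
  (v t).card ≤ 1 ∨ ∃ s < t, v t = v s

lemma IsFreeStep.comp {f : Finset α → Finset α}
    (hf : ∀ x : Finset α, x.card ≤ 1 → (f x).card ≤ 1) (ht : IsFreeStep v t) :
    IsFreeStep (f ∘ v) t := by
  rcases ht with hcard | ⟨s, hs, hvs⟩
  · exact Or.inl (hf _ hcard)
  · exact Or.inr ⟨s, hs, congrArg f hvs⟩

variable [DecidableEq α]

def IsSumStep (v : Fin m → Finset α) (t : Fin m) : Prop :=
  ∃ s₁ s₂ : Fin m, s₁ < t ∧ s₂ < t ∧ Disjoint (v s₁) (v s₂) ∧ v t = v s₁ ∪ v s₂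

def IsDirectProgram (v : Fin m → Finset α) (A : Finset (Fin m)) : Prop :=
  (∀ t ∈ A, IsSumStep v t) ∧ ∀ t ∉ A, IsFreeStep v t

/-- The embedding `e` names the inputs, so that the high half of the inputs can be relabelled
`j ↦ j + 2^k` without shifting any value. -/
def ComputesSupersetSums (n : ℕ) (e : ℕ ↪ α) (v : Fin m → Finset α) : Prop :=
  ∀ i < 2 ^ n, ∃ t, v t = (bitSupersets n i).map e

def IsMixedStep (v : Fin m → Finset α) (L : Finset α) (t : Fin m) : Prop :=
  ∃ s₁ < t, ∃ s₂ < t, v t = v s₁ ∪ v s₂ ∧ Disjoint (v s₁) L ∧ ¬ Disjoint (v s₂) L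

def avoiding (L x : Finset α) : Finset α := if Disjoint x L then x else ∅

lemma IsDirectProgram.exists_comp (hv : IsDirectProgram v A) {f : Finset α → Finset α}
    (hf : ∀ x : Finset α, x.card ≤ 1 → (f x).card ≤ 1)
    (hA : ∀ t ∈ A, ¬ IsFreeStep (f ∘ v) t → IsSumStep (f ∘ v) t) :
    ∃ A' ⊆ A, IsDirectProgram (f ∘ v) A' ∧ ∀ t ∈ A', ¬ IsFreeStep (f ∘ v) t := by
  classical
  refine ⟨A.filter fun t => ¬ IsFreeStep (f ∘ v) t, filter_subset _ _, ⟨?_, ?_⟩,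
    fun t ht => (mem_filter.1 ht).2⟩
  · intro t ht
    exact hA t (mem_filter.1 ht).1 (mem_filter.1 ht).2
  · intro t ht
    by_cases htA : t ∈ A
    · simpa [htA] using ht
    · exact (hv.2 t htA).comp hf

lemma IsSumStep.comp_inter (ht : IsSumStep v t) : IsSumStep ((· ∩ L) ∘ v) t := by
  obtain ⟨s₁, s₂, h₁, h₂, hdisj, hvt⟩ := ht
  exact ⟨s₁, s₂, h₁, h₂, hdisj.mono inter_subset_left inter_subset_left,
    by simp only [Function.comp_apply, hvt, union_inter_distrib_right]⟩

lemma IsSumStep.comp_avoiding (ht : IsSumStep v t) (htL : Disjoint (v t) L) :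
    IsSumStep (avoiding L ∘ v) t := by
  obtain ⟨s₁, s₂, h₁, h₂, hdisj, hvt⟩ := ht
  rw [hvt, disjoint_union_left] at htL
  refine ⟨s₁, s₂, h₁, h₂, ?_, ?_⟩ <;>
    simp only [Function.comp_apply, avoiding, if_pos htL.1, if_pos htL.2, hvt,
      disjoint_union_left.2 htL, if_true, hdisj]

lemma isFreeStep_comp_inter_of_disjoint (htL : Disjoint (v t) L) : IsFreeStep ((· ∩ L) ∘ v) t :=
  Or.inl (by simp [disjoint_iff_inter_eq_empty.1 htL])

lemma isFreeStep_comp_avoiding_of_not_disjoint (htL : ¬ Disjoint (v t) L) :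
    IsFreeStep (avoiding L ∘ v) t :=
  Or.inl (by simp [avoiding, htL])

lemma IsMixedStep.isFreeStep_comp_inter (ht : IsMixedStep v L t) : IsFreeStep ((· ∩ L) ∘ v) t := by
  obtain ⟨s₁, -, s₂, h₂, hvt, h₁L, -⟩ := ht
  refine Or.inr ⟨s₂, h₂, ?_⟩
  simp only [Function.comp_apply, hvt, union_inter_distrib_right,
    disjoint_iff_inter_eq_empty.1 h₁L, empty_union]

lemma IsMixedStep.not_disjoint (ht : IsMixedStep v L t) : ¬ Disjoint (v t) L := by
  obtain ⟨s₁, -, s₂, -, hvt, -, h₂L⟩ := ht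
  rw [hvt, disjoint_union_left]
  exact fun h => h₂L h.2

lemma IsDirectProgram.exists_comp_inter (hv : IsDirectProgram v A) :
    ∃ A' ⊆ A, IsDirectProgram ((· ∩ L) ∘ v) A' ∧ ∀ t ∈ A', ¬ IsFreeStep ((· ∩ L) ∘ v) t :=
  hv.exists_comp (fun _ hx => (card_le_card inter_subset_left).trans hx)
    fun t ht _ => (hv.1 t ht).comp_inter

lemma IsDirectProgram.exists_comp_avoiding (hv : IsDirectProgram v A) :
    ∃ A' ⊆ A, IsDirectProgram (avoiding L ∘ v) A' ∧
      ∀ t ∈ A', ¬ IsFreeStep (avoiding L ∘ v) t := by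
  refine hv.exists_comp (fun x hx => ?_) fun t ht hfree => ?_
  · unfold avoiding
    split_ifs <;> simp [hx]
  · by_cases htL : Disjoint (v t) L
    · exact (hv.1 t ht).comp_avoiding htL
    · exact absurd (isFreeStep_comp_avoiding_of_not_disjoint htL) hfree

lemma IsDirectProgram.exists_isMixedStep (hv : IsDirectProgram v A) {u : α} (hu : u ∉ L)
    (t₀ : Fin m) (hu₀ : u ∈ v t₀) (ht₀ : ¬ Disjoint (v t₀) L) :
    ∃ t ∈ A, IsMixedStep v L t ∧ u ∈ v t ∧ v t ⊆ v t₀ := by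
  induction t₀ using WellFoundedLT.induction with
  | ind t₀ ih =>
  by_cases htA : t₀ ∈ A
  · have split : ∀ a < t₀, ∀ b < t₀, v t₀ = v a ∪ v b → u ∈ v a →
        ∃ t ∈ A, IsMixedStep v L t ∧ u ∈ v t ∧ v t ⊆ v t₀ := by
      intro a ha b hb hab hua
      by_cases haL : Disjoint (v a) L
      · have hbL : ¬ Disjoint (v b) L := fun hbL => ht₀ (hab ▸ disjoint_union_left.2 ⟨haL, hbL⟩)
        exact ⟨t₀, htA, ⟨a, ha, b, hb, hab, haL, hbL⟩, hu₀, subset_rfl⟩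
      · obtain ⟨t, htA, hmix, hut, hsub⟩ := ih a ha hua haL
        exact ⟨t, htA, hmix, hut, hsub.trans (hab ▸ subset_union_left)⟩
    obtain ⟨s₁, s₂, h₁, h₂, -, hvt⟩ := hv.1 t₀ htA
    rcases mem_union.1 (hvt ▸ hu₀) with hu₁ | hu₂
    · exact split s₁ h₁ s₂ h₂ hvt hu₁
    · exact split s₂ h₂ s₁ h₁ (hvt.trans (union_comm _ _)) hu₂
  · rcases hv.2 t₀ htA with hcard | ⟨s, hs, hvs⟩
    · obtain ⟨x, hx, hxL⟩ := not_disjoint_iff.1 ht₀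
      exact absurd (card_le_one.1 hcard u hu₀ x hx ▸ hxL) hu
    · obtain ⟨t, htA, hmix, hut, hsub⟩ := ih s hs (hvs ▸ hu₀) (hvs ▸ ht₀)
      exact ⟨t, htA, hmix, hut, hvs ▸ hsub⟩

lemma ComputesSupersetSums.comp_inter_range {k : ℕ} {e : ℕ ↪ α}
    (hv : ComputesSupersetSums (k + 1) e v) :
    ComputesSupersetSums k e ((· ∩ (range (2 ^ k)).map e) ∘ v) := by
  intro i hi
  obtain ⟨t, ht⟩ := hv i (by rw [pow_succ]; omega)
  exact ⟨t, by simp only [Function.comp_apply, ht, ← map_inter, bitSupersets_succ_inter_range]⟩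

lemma ComputesSupersetSums.comp_avoiding_range {k : ℕ} {e : ℕ ↪ α}
    (hv : ComputesSupersetSums (k + 1) e v) :
    ComputesSupersetSums k ((addRightEmbedding (2 ^ k)).trans e)
      (avoiding ((range (2 ^ k)).map e) ∘ v) := by
  intro i hi
  obtain ⟨t, ht⟩ := hv (i + 2 ^ k) (by rw [pow_succ]; omega)
  rw [bitSupersets_succ_add_two_pow hi, map_map] at ht
  have hL : Disjoint (v t) ((range (2 ^ k)).map e) := by
    rw [ht, ← map_map, disjoint_map, disjoint_left]
    simp
  exact ⟨t, by rw [Function.comp_apply, avoiding, if_pos hL, ht]⟩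

lemma IsDirectProgram.exists_two_pow_le_card_isMixedStep {k : ℕ} {e : ℕ ↪ α}
    (hv : IsDirectProgram v A) (hout : ComputesSupersetSums (k + 1) e v) :
    ∃ A' ⊆ A, 2 ^ k ≤ A'.card ∧ ∀ t ∈ A', IsMixedStep v ((range (2 ^ k)).map e) t := by
  classical
  have hpath : ∀ i < 2 ^ k, ∃ t ∈ A, IsMixedStep v ((range (2 ^ k)).map e) t ∧
      e (i + 2 ^ k) ∈ v t ∧ v t ⊆ (bitSupersets (k + 1) i).map e := by
    intro i hi
    obtain ⟨t₀, ht₀⟩ := hout i (by rw [pow_succ]; omega)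
    refine ht₀ ▸ hv.exists_isMixedStep (by simp) t₀ ?_ ?_
    · rw [ht₀, mem_map' e, add_two_pow_mem_bitSupersets_succ_iff hi hi]
      exact self_mem_bitSupersets hi
    · rw [ht₀, not_disjoint_iff]
      exact ⟨e i, by simpa using self_mem_bitSupersets (by rw [pow_succ]; omega), by simpa⟩
  have : Nonempty (Fin m) := ⟨(hout 0 (by positivity)).choose⟩
  choose! f hfA hfmix hfu hfsub using hpath
  refine ⟨(range (2 ^ k)).image f, by simpa [image_subset_iff] using hfA,
    le_card_of_inj_on_range f (fun i hi => mem_image_of_mem f (mem_range.2 hi)) ?_,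
    by simpa using hfmix⟩
  intro i hi j hj hij
  have hji := hfsub i hi (hij ▸ hfu j hj)
  have hij' := hfsub j hj (hij ▸ hfu i hi)
  rw [mem_map' e, add_two_pow_mem_bitSupersets_succ_iff hi hj] at hji
  rw [mem_map' e, add_two_pow_mem_bitSupersets_succ_iff hj hi] at hij'
  exact eq_of_mem_bitSupersets_of_mem hji hij'

theorem IsDirectProgram.le_card {n : ℕ} {e : ℕ ↪ α} (hv : IsDirectProgram v A)
    (hout : ComputesSupersetSums n e v) : n * 2 ^ (n - 1) ≤ A.card := by
  induction n generalizing v A e with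
  | zero => simp
  | succ k ih =>
    set L := (range (2 ^ k)).map e
    obtain ⟨A₀, hA₀, hv₀, hfree₀⟩ := hv.exists_comp_inter (L := L)
    obtain ⟨A₁, hA₁, hv₁, hfree₁⟩ := hv.exists_comp_avoiding (L := L)
    obtain ⟨Aₘ, hAₘ, hcardₘ, hmixed⟩ := hv.exists_two_pow_le_card_isMixedStep hout
    have h₀₁ : Disjoint A₀ A₁ := disjoint_left.2 fun t h₀ h₁ =>
      hfree₀ t h₀ <| isFreeStep_comp_inter_of_disjoint <| by_contra fun hL =>
        hfree₁ t h₁ (isFreeStep_comp_avoiding_of_not_disjoint hL)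
    have h₀₁ₘ : Disjoint (A₀ ∪ A₁) Aₘ := by
      refine disjoint_union_left.2 ⟨disjoint_left.2 fun t h₀ hₘ => ?_,
        disjoint_left.2 fun t h₁ hₘ => ?_⟩
      · exact hfree₀ t h₀ (hmixed t hₘ).isFreeStep_comp_inter
      · exact hfree₁ t h₁ (isFreeStep_comp_avoiding_of_not_disjoint (hmixed t hₘ).not_disjoint)
    calc (k + 1) * 2 ^ (k + 1 - 1) = k * 2 ^ (k - 1) + k * 2 ^ (k - 1) + 2 ^ k := by
          rcases k with _ | k
          · rfl
          · simp only [Nat.add_sub_cancel, pow_succ]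
            ring
      _ ≤ A₀.card + A₁.card + Aₘ.card :=
          add_le_add (add_le_add (ih hv₀ hout.comp_inter_range)
            (ih hv₁ hout.comp_avoiding_range)) hcardₘ
      _ = (A₀ ∪ A₁ ∪ Aₘ).card := by rw [card_union_of_disjoint h₀₁ₘ, card_union_of_disjoint h₀₁]
      _ ≤ A.card := card_le_card (union_subset (union_subset hA₀ hA₁) hAₘ)

end DirectProgram

/-- Any direct addition-only straight-line program (each computed value is a set of
distinct inputs: either a singleton input `{j}` or the disjoint union of two earlier
values) that outputs every partial sum `a_i = Σ_{j ⪰ i} q_j` (represented by the set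
of its addends `{j < 2^n | i &&& j = i}`) uses at least `n·2^(n−1)` additions. -/
theorem stmt_1 (n m : ℕ) (v : Fin m → Finset ℕ) (isAdd : Fin m → Bool)
    (hstep : ∀ t : Fin m,
      if isAdd t then
        ∃ s₁ s₂ : Fin m, s₁ < t ∧ s₂ < t ∧ Disjoint (v s₁) (v s₂) ∧ v t = v s₁ ∪ v s₂
      else ∃ j < 2 ^ n, v t = {j})
    (houtput : ∀ i < 2 ^ n, ∃ t : Fin m,
      v t = (Finset.range (2 ^ n)).filter (fun j => i &&& j = i)) :
    n * 2 ^ (n - 1) ≤ (Finset.univ.filter (fun t => isAdd t = true)).card := by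
  have hv : IsDirectProgram v (univ.filter fun t => isAdd t = true) := by
    refine ⟨fun t ht => ?_, fun t ht => ?_⟩
    · have hs := hstep t
      rwa [if_pos (mem_filter.1 ht).2] at hs
    · have hs := hstep t
      rw [if_neg (by simpa using ht)] at hs
      obtain ⟨j, -, hj⟩ := hs
      exact Or.inl (by simp [hj])
  have hout : ComputesSupersetSums n (Function.Embedding.refl ℕ) v := by
    simpa [ComputesSupersetSums, bitSupersets] using houtput
  exact hv.le_card hout
end

section
/- The divide-and-conquer recursion is correct: if ā_{j'} = Σ_{j'' ⪰ j'} q_{0j''} and ã_{j'} = Σ_{j'' ⪰ j'} q_{1j''} are the partial sums of the lower and upper halves (indices with top bit 0 and 1 respectively), then a_{(1 j')_2} = ã_{j'} and a_{(0 j')_2} = ā_{j'} + ã_{j'}. -/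
/-!
Split `range (2 ^ (m + 1))` into the halves `j < 2 ^ m` and `2 ^ m + j`. Writing `2 ^ m + x`
as `2 ^ m ||| x`, the top bit is absorbed by `&&&` against a lower-half index and is kept against
an upper-half one. So no lower-half `j` dominates `2 ^ m + j'`, while `2 ^ m + j` dominates it
exactly when `j` dominates `j'`; and domination of `j'` does not see the top bit at all.
-/

theorem Finset.sum_filter_range_add {M : Type*} [AddCommMonoid M] (p : ℕ → Prop)
    [DecidablePred p] (f : ℕ → M) (a b : ℕ) :
    ∑ j ∈ (range (a + b)).filter p, f j
      = ∑ j ∈ (range a).filter p, f j + ∑ j ∈ (range b).filter (fun j => p (a + j)), f (a + j) := by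
  simp only [sum_filter, sum_range_add]

namespace Nat

theorem two_pow_add_eq_or {m x : ℕ} (hx : x < 2 ^ m) : 2 ^ m + x = 2 ^ m ||| x := by
  simpa using two_pow_add_eq_or_of_lt hx 1

theorem two_pow_and_eq_zero_of_lt {m y : ℕ} (hy : y < 2 ^ m) : 2 ^ m &&& y = 0 := by
  simp [two_pow_and, testBit_lt_two_pow hy]

theorem two_pow_add_and_of_lt {m x y : ℕ} (hx : x < 2 ^ m) (hy : y < 2 ^ m) :
    (2 ^ m + x) &&& y = x &&& y := by
  rw [two_pow_add_eq_or hx, and_or_distrib_right, two_pow_and_eq_zero_of_lt hy, zero_or]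

theorem two_pow_add_and_two_pow_add {m x y : ℕ} (hx : x < 2 ^ m) (hy : y < 2 ^ m) :
    (2 ^ m + x) &&& (2 ^ m + y) = 2 ^ m + (x &&& y) := by
  rw [two_pow_add_eq_or hx, two_pow_add_eq_or hy, two_pow_add_eq_or (and_lt_two_pow x hy),
    ← or_and_distrib_left]

end Nat

/-- Correctness of the divide-and-conquer recursion: with `a_i = Σ_{j ⪰ i} q_j`
(indices `j < 2^n`, `⪰` bitwise domination) and `ā_{j'}, ã_{j'}` the partial sums of
the top-bit-0 and top-bit-1 halves respectively, we have
`a_{(1 j')₂} = ã_{j'}` and `a_{(0 j')₂} = ā_{j'} + ã_{j'}`. -/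
theorem stmt_15 (n : ℕ) (hn : 1 ≤ n) (q : ℕ → ℝ) (j' : ℕ) (hj' : j' < 2 ^ (n - 1)) :
    (∑ j ∈ (Finset.range (2 ^ n)).filter
        (fun j => (2 ^ (n - 1) + j') &&& j = 2 ^ (n - 1) + j'), q j)
      = (∑ j'' ∈ (Finset.range (2 ^ (n - 1))).filter (fun j'' => j' &&& j'' = j'),
          q (2 ^ (n - 1) + j'')) ∧
    (∑ j ∈ (Finset.range (2 ^ n)).filter (fun j => j' &&& j = j'), q j)
      = (∑ j'' ∈ (Finset.range (2 ^ (n - 1))).filter (fun j'' => j' &&& j'' = j'), q j'')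
        + (∑ j'' ∈ (Finset.range (2 ^ (n - 1))).filter (fun j'' => j' &&& j'' = j'),
            q (2 ^ (n - 1) + j'')) := by
  obtain ⟨m, rfl⟩ : ∃ m, n = m + 1 := ⟨n - 1, by omega⟩
  rw [Nat.add_sub_cancel] at hj' ⊢
  rw [pow_succ, mul_two, Finset.sum_filter_range_add, Finset.sum_filter_range_add]
  constructor
  · have h_lower_half_empty :
        ∀ j ∈ Finset.range (2 ^ m), (2 ^ m + j') &&& j ≠ 2 ^ m + j' := by
      intro j hj
      rw [Nat.two_pow_add_and_of_lt hj' (Finset.mem_range.1 hj)]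
      have := Nat.and_lt_two_pow j' (Finset.mem_range.1 hj)
      omega
    rw [Finset.filter_false_of_mem h_lower_half_empty, Finset.sum_empty, zero_add]
    refine Finset.sum_congr (Finset.filter_congr fun j hj => ?_) fun _ _ => rfl
    rw [Nat.two_pow_add_and_two_pow_add hj' (Finset.mem_range.1 hj), Nat.add_left_cancel_iff]
  · refine congrArg _ (Finset.sum_congr (Finset.filter_congr fun j hj => ?_) fun _ _ => rfl)
    rw [Nat.land_comm, Nat.two_pow_add_and_of_lt (Finset.mem_range.1 hj) hj', Nat.land_comm]
end
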